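/- arXiv:2601.09901 — 2 statements merged into one kernel-verified Lean document; each statement's English description precedes it below -/
import Mathlib

section
/- Let Y be a geodesic metric space and let γ : Y → X be an (M; λ, ε)-stable embedding into a metric space X. Then for every (k, c)-quasi-geodesic α in X with endpoints in γ(Y), there exists an (M'; λ, ε)-Morse quasi-geodesic β contained in γ(Y) such that α lies in the M'(k,c)-neighborhood of β, where M'(k,c) = M(max(λ,k), max(ε,c)). -/
open Metric Set

def IsQIE {Y X : Type*} [PseudoMetricSpace Y] [PseudoMetricSpace X]
    (f : Y → X) (l e : ℝ) : Prop :=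
  ∀ x y : Y, dist x y / l - e ≤ dist (f x) (f y) ∧ dist (f x) (f y) ≤ l * dist x y + e

def IsQGOn {X : Type*} [PseudoMetricSpace X] (γ : ℝ → X) (I : Set ℝ) (l e : ℝ) : Prop :=
  ∀ s ∈ I, ∀ t ∈ I, |s - t| / l - e ≤ dist (γ s) (γ t) ∧ dist (γ s) (γ t) ≤ l * |s - t| + e

def IsMorseOn {X : Type*} [PseudoMetricSpace X] (γ : ℝ → X) (I : Set ℝ)
    (M : ℝ → ℝ → ℝ) (l e : ℝ) : Prop :=
  IsQGOn γ I l e ∧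
  ∀ s ∈ I, ∀ t ∈ I, s < t → ∀ (k c : ℝ) (α : ℝ → X) (u v : ℝ), u ≤ v →
    IsQGOn α (Icc u v) k c → α u = γ s → α v = γ t →
    hausdorffDist (α '' Icc u v) (γ '' (I ∩ Icc s t)) ≤ M k c

def IsStableEmb {Y X : Type*} [PseudoMetricSpace Y] [PseudoMetricSpace X]
    (f : Y → X) (N : ℝ → ℝ → ℝ) (l e : ℝ) : Prop :=
  IsQIE f l e ∧
  ∀ (k c : ℝ) (α β : ℝ → X) (u v u' v' : ℝ), u ≤ v → u' ≤ v' →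
    IsQGOn α (Icc u v) k c → IsQGOn β (Icc u' v') k c →
    α u ∈ range f → α v ∈ range f → β u' ∈ range f → β v' ∈ range f →
    (∀ p ∈ α '' Icc u v, infDist p (β '' Icc u' v') ≤ N k c) ∧
    (∀ p ∈ β '' Icc u' v', infDist p (α '' Icc u v) ≤ N k c)

def IsGeodesicSpace (X : Type*) [PseudoMetricSpace X] : Prop :=
  ∀ x y : X, ∃ f : ℝ → X, f 0 = x ∧ f (dist x y) = y ∧
    ∀ s ∈ Icc (0 : ℝ) (dist x y), ∀ t ∈ Icc (0 : ℝ) (dist x y), dist (f s) (f t) = |s - t|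


lemma qgOn_mono {X : Type*} [PseudoMetricSpace X] {γ : ℝ → X} {I J : Set ℝ} {l e : ℝ}
    (h : IsQGOn γ J l e) (hIJ : I ⊆ J) : IsQGOn γ I l e :=
  fun s hs t ht => h s (hIJ hs) t (hIJ ht)

lemma bridge_infDist {X : Type*} [PseudoMetricSpace X] {A Aψ Bψ B : Set X} {M' : ℝ}
    (hAψne : Aψ.Nonempty) (hBψne : Bψ.Nonempty) (hBsub : Bψ ⊆ B)
    (h0 : ∀ p ∈ A, infDist p Aψ = 0)
    (hS : ∀ q ∈ Aψ, infDist q Bψ ≤ M') :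
    ∀ p ∈ A, infDist p B ≤ M' := by
  intro p hp
  have h1 : infDist p B ≤ infDist p Bψ := infDist_le_infDist_of_subset hBsub hBψne
  refine h1.trans (le_of_forall_pos_le_add ?_)
  intro ε hε
  have h2 : infDist p Aψ < ε := by rw [h0 p hp]; exact hε
  obtain ⟨q, hq, hdq⟩ := (infDist_lt_iff hAψne).1 h2
  have h3 : infDist p Bψ ≤ infDist q Bψ + dist p q := infDist_le_infDist_add_dist
  have := hS q hq
  linarith

lemma reparamQG {X : Type*} [PseudoMetricSpace X] (φ : ℝ → X) (p q k₀ c₀ l' e' : ℝ)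
    (hpq : p ≤ q) (hφ : IsQGOn φ (Icc p q) k₀ c₀)
    (hk : k₀ ≤ l') (hc : c₀ ≤ e') (he : 0 ≤ e') :
    ∃ (ψ : ℝ → X) (p₁ q₁ : ℝ), p₁ ≤ q₁ ∧ IsQGOn ψ (Icc p₁ q₁) l' e' ∧
      ψ '' Icc p₁ q₁ ⊆ φ '' Icc p q ∧
      (∀ x ∈ φ '' Icc p q, infDist x (ψ '' Icc p₁ q₁) = 0) ∧
      (ψ p₁ = φ p ∨ ψ p₁ = φ q) ∧ (ψ q₁ = φ p ∨ ψ q₁ = φ q) := by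
  by_cases hcase : 0 < l' ∧ k₀ ≤ 0
  · obtain ⟨hl', hk₀⟩ := hcase
    have hdiam : ∀ x ∈ Icc p q, ∀ y ∈ Icc p q, dist (φ x) (φ y) ≤ c₀ := by
      intro x hx y hy
      have h2 := (hφ x hx y hy).2
      nlinarith [abs_nonneg (x - y), mul_nonpos_of_nonpos_of_nonneg hk₀ (abs_nonneg (x - y))]
    rcases eq_or_lt_of_le he with he0 | he'
    · -- e' = 0
      refine ⟨fun _ => φ p, 0, 0, le_refl 0, ?_, ?_, ?_, Or.inl rfl, Or.inl rfl⟩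
      · intro s hs t ht
        have hs0 : s = 0 := le_antisymm hs.2 hs.1
        have ht0 : t = 0 := le_antisymm ht.2 ht.1
        subst hs0; subst ht0
        simp only [sub_self, abs_zero, zero_div, dist_self, mul_zero, zero_add]
        exact ⟨by linarith, he⟩
      · rintro x ⟨t, _, rfl⟩; exact ⟨p, ⟨le_refl p, hpq⟩, rfl⟩
      · rintro x ⟨r, hr, rfl⟩
        have hd : dist (φ r) (φ p) = 0 := by
          have h1 := hdiam r hr p ⟨le_refl p, hpq⟩
          have h2 := dist_nonneg (x := φ r) (y := φ p)
          rw [← he0] at hc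
          linarith
        have hmem : (fun _ => φ p) (0:ℝ) ∈ (fun _ => φ p) '' Icc (0:ℝ) 0 :=
          ⟨0, ⟨le_refl 0, le_refl 0⟩, rfl⟩
        have h1 : infDist (φ r) ((fun _ => φ p) '' Icc (0:ℝ) 0) ≤ dist (φ r) (φ p) :=
          infDist_le_dist_of_mem hmem
        have h2 := infDist_nonneg (x := φ r) (s := (fun _ => φ p) '' Icc (0:ℝ) 0)
        linarith
    · -- e' > 0
      set δ := l' * e' with hδ
      have hδpos : 0 < δ := mul_pos hl' he'
      have argmem : ∀ x ∈ Icc (0:ℝ) δ, p + x / δ * (q - p) ∈ Icc p q := by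
        intro x hx
        have h1 : 0 ≤ x / δ := div_nonneg hx.1 hδpos.le
        have h2 : x / δ ≤ 1 := (div_le_one hδpos).2 hx.2
        constructor <;> nlinarith
      refine ⟨fun x => φ (p + x / δ * (q - p)), 0, δ, hδpos.le, ?_, ?_, ?_, ?_, ?_⟩
      · intro s hs t ht
        constructor
        · have habs : |s - t| ≤ δ := abs_sub_le_iff.mpr ⟨by linarith [hs.1, hs.2, ht.1, ht.2],
            by linarith [hs.1, hs.2, ht.1, ht.2]⟩
          have : |s - t| / l' ≤ e' := (div_le_iff₀ hl').2 (by rw [hδ] at habs; linarith)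
          have := dist_nonneg (x := φ (p + s / δ * (q - p))) (y := φ (p + t / δ * (q - p)))
          linarith
        · have := hdiam _ (argmem s hs) _ (argmem t ht)
          have h2 : 0 ≤ l' * |s - t| := mul_nonneg hl'.le (abs_nonneg _)
          linarith
      · rintro x ⟨t, ht, rfl⟩; exact ⟨_, argmem t ht, rfl⟩
      · rintro x ⟨r, hr, rfl⟩
        rcases eq_or_lt_of_le hpq with heq | hlt
        · subst heq
          have hr0 : r = p := le_antisymm hr.2 hr.1
          subst hr0
          refine infDist_zero_of_mem ⟨0, ⟨le_refl 0, hδpos.le⟩, ?_⟩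
          simp
        · refine infDist_zero_of_mem ⟨δ * ((r - p) / (q - p)), ⟨?_, ?_⟩, ?_⟩
          · exact mul_nonneg hδpos.le (div_nonneg (by linarith [hr.1]) (by linarith))
          · nlinarith [(div_le_one (by linarith : (0:ℝ) < q - p)).2 (by linarith [hr.2] : r - p ≤ q - p),
              hδpos.le]
          · show φ (p + δ * ((r - p) / (q - p)) / δ * (q - p)) = φ r
            have hne : q - p ≠ 0 := sub_ne_zero.mpr hlt.ne'
            congr 1
            field_simp
            ring
      · left; simp
      · right
        show φ (p + δ / δ * (q - p)) = φ q
        rw [div_self hδpos.ne', one_mul]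
        congr 1; ring
  · -- identity works
    refine ⟨φ, p, q, hpq, ?_, subset_rfl, fun x hx => infDist_zero_of_mem hx,
      Or.inl rfl, Or.inr rfl⟩
    intro s hs t ht
    obtain ⟨h1, h2⟩ := hφ s hs t ht
    constructor
    · rcases le_or_gt l' 0 with h | h
      · have hnp : |s - t| / l' ≤ 0 := div_nonpos_of_nonneg_of_nonpos (abs_nonneg _) h
        have := dist_nonneg (x := φ s) (y := φ t)
        linarith
      · have hk0 : 0 < k₀ := by
          by_contra hk0
          exact hcase ⟨h, le_of_not_gt hk0⟩
        have : |s - t| / l' ≤ |s - t| / k₀ := by gcongr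
        linarith
    · have : k₀ * |s - t| ≤ l' * |s - t| := mul_le_mul_of_nonneg_right hk (abs_nonneg _)
      linarith

/-- if `γ : Y → X` is an `(M; l, e)`-stable embedding of a geodesic space `Y`, then
every `(k,c)`-quasi-geodesic `α` with endpoints in `γ(Y)` lies in the `M' k c`-neighborhood of an
`(M'; l, e)`-Morse quasi-geodesic `β` contained in `γ(Y)`, where
`M' k c = M (max l k) (max e c)`. -/
theorem stable_qg_close_to_morse_in_image {Y X : Type*} [MetricSpace Y] [PseudoMetricSpace X]
    (hYgeo : IsGeodesicSpace Y) (γ : Y → X) (M : ℝ → ℝ → ℝ) (l e : ℝ)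
    (hγ : IsStableEmb γ M l e)
    (k c : ℝ) (α : ℝ → X) (u v : ℝ) (huv : u ≤ v)
    (hα : IsQGOn α (Icc u v) k c)
    (hαu : α u ∈ range γ) (hαv : α v ∈ range γ) :
    ∃ (β : ℝ → X) (a b : ℝ), a ≤ b ∧
      β '' Icc a b ⊆ range γ ∧
      IsMorseOn β (Icc a b) (fun k' c' => M (max l k') (max e c')) l e ∧
      ∀ p ∈ α '' Icc u v, infDist p (β '' Icc a b) ≤ M (max l k) (max e c) := by
  obtain ⟨hQIE, hstab⟩ := hγ
  obtain ⟨y₁, hy₁⟩ := hαu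
  obtain ⟨y₂, hy₂⟩ := hαv
  have he : 0 ≤ e := by have h := (hQIE y₁ y₁).2; simpa using h
  obtain ⟨f, hf0, hfD, hfiso⟩ := hYgeo y₁ y₂
  set D := dist y₁ y₂ with hD
  have hD0 : 0 ≤ D := dist_nonneg
  set β : ℝ → X := γ ∘ f with hβdef
  have hβrange : β '' Icc 0 D ⊆ range γ := by rintro x ⟨t, _, rfl⟩; exact ⟨f t, rfl⟩
  have hβQG : IsQGOn β (Icc 0 D) l e := by
    intro s hs t ht
    have hd := hfiso s hs t ht
    have h := hQIE (f s) (f t)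
    rw [hd] at h
    exact h
  -- generic stability comparison: any (k₁,c₁)-QG with endpoints β-relevant vs a sub-QG of β
  have main : ∀ (k₁ c₁ : ℝ) (α' : ℝ → X) (u₁ v₁ : ℝ), u₁ ≤ v₁ →
      IsQGOn α' (Icc u₁ v₁) k₁ c₁ → α' u₁ ∈ range γ → α' v₁ ∈ range γ →
      ∀ s t : ℝ, s ≤ t → IsQGOn β (Icc s t) l e →
      (∀ p ∈ α' '' Icc u₁ v₁, infDist p (β '' Icc s t) ≤ M (max l k₁) (max e c₁)) ∧
      (∀ p ∈ β '' Icc s t, infDist p (α' '' Icc u₁ v₁) ≤ M (max l k₁) (max e c₁)) ∧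
      0 ≤ M (max l k₁) (max e c₁) := by
    intro k₁ c₁ α' u₁ v₁ hu₁v₁ hα' hα'u hα'v s t hst hβst
    set l₁ := max l k₁
    set e₁ := max e c₁
    have he₁ : 0 ≤ e₁ := le_trans he (le_max_left e c₁)
    obtain ⟨ψ₁, p₁, q₁, hp₁q₁, hψ₁QG, hψ₁sub, hψ₁inf, hψ₁l, hψ₁r⟩ :=
      reparamQG α' u₁ v₁ k₁ c₁ l₁ e₁ hu₁v₁ hα' (le_max_right l k₁) (le_max_right e c₁) he₁
    obtain ⟨ψ₂, p₂, q₂, hp₂q₂, hψ₂QG, hψ₂sub, hψ₂inf, hψ₂l, hψ₂r⟩ :=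
      reparamQG β s t l e l₁ e₁ hst hβst (le_max_left l k₁) (le_max_left e c₁) he₁
    have hβs : β s ∈ range γ := ⟨f s, rfl⟩
    have hβt : β t ∈ range γ := ⟨f t, rfl⟩
    have h1 : ψ₁ p₁ ∈ range γ := by rcases hψ₁l with h | h <;> rw [h] <;> assumption
    have h2 : ψ₁ q₁ ∈ range γ := by rcases hψ₁r with h | h <;> rw [h] <;> assumption
    have h3 : ψ₂ p₂ ∈ range γ := by rcases hψ₂l with h | h <;> rw [h] <;> assumption
    have h4 : ψ₂ q₂ ∈ range γ := by rcases hψ₂r with h | h <;> rw [h] <;> assumption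
    obtain ⟨S1, S2⟩ := hstab l₁ e₁ ψ₁ ψ₂ p₁ q₁ p₂ q₂ hp₁q₁ hp₂q₂ hψ₁QG hψ₂QG h1 h2 h3 h4
    have hψ₁ne : (ψ₁ '' Icc p₁ q₁).Nonempty := ⟨ψ₁ p₁, ⟨p₁, ⟨le_refl p₁, hp₁q₁⟩, rfl⟩⟩
    have hψ₂ne : (ψ₂ '' Icc p₂ q₂).Nonempty := ⟨ψ₂ p₂, ⟨p₂, ⟨le_refl p₂, hp₂q₂⟩, rfl⟩⟩
    have hM0 : 0 ≤ M l₁ e₁ := le_trans infDist_nonneg (S1 _ ⟨p₁, ⟨le_refl p₁, hp₁q₁⟩, rfl⟩)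
    exact ⟨bridge_infDist hψ₁ne hψ₂ne hψ₂sub hψ₁inf S1,
      bridge_infDist hψ₂ne hψ₁ne hψ₁sub hψ₂inf S2, hM0⟩
  refine ⟨β, 0, D, hD0, hβrange, ⟨hβQG, ?_⟩, ?_⟩
  · -- Morse property
    intro s hs t ht hst k₁ c₁ α' u₁ v₁ hu₁v₁ hα' hα'u hα'v
    have hsub : Icc s t ⊆ Icc 0 D := Icc_subset_Icc hs.1 ht.2
    have hβst : IsQGOn β (Icc s t) l e := qgOn_mono hβQG hsub
    have hends : α' u₁ ∈ range γ := by rw [hα'u]; exact ⟨f s, rfl⟩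
    have hendt : α' v₁ ∈ range γ := by rw [hα'v]; exact ⟨f t, rfl⟩
    obtain ⟨B1, B2, hM0⟩ := main k₁ c₁ α' u₁ v₁ hu₁v₁ hα' hends hendt s t hst.le hβst
    have hinter : Icc (0:ℝ) D ∩ Icc s t = Icc s t := inter_eq_self_of_subset_right hsub
    rw [hinter]
    exact hausdorffDist_le_of_infDist hM0 B1 B2
  · -- α close to β
    have hαu' : α u ∈ range γ := ⟨y₁, hy₁⟩
    have hαv' : α v ∈ range γ := ⟨y₂, hy₂⟩
    obtain ⟨B1, _, _⟩ := main k c α u v huv hα hαu' hαv' 0 D hD0 hβQG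
    exact B1
end

section
/- Let X be a δ-hyperbolic geodesic space and let Z ⊆ X be a subset such that every (λ, ε)-quasi-geodesic with endpoints in Z lies in the M(λ,ε)-neighborhood of Z for some function M (i.e., the image of a stable embedding). Let p : X → Z be a nearest point projection. Then for x, y ∈ X, if some geodesic [x, y] is disjoint from the (M(1,0)+δ+1)-neighborhood of Z while d(x, Z) > d(x,y) + 1, then d(p(x), p(y)) is bounded by a constant depending only on δ and M. -/
open Metric Set

def IsHyperbolic (X : Type*) [PseudoMetricSpace X] (δ : ℝ) : Prop :=
  ∀ x y z w : X,
    dist x y + dist z w ≤ max (dist x z + dist y w) (dist x w + dist y z) + 2 * δ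

/-- in a geodesic `δ`-hyperbolic space, if `Z` is quasi-convex (every
`(l,e)`-quasi-geodesic with endpoints in `Z` stays in its `M l e`-neighborhood) and `p` is a
nearest point projection to `Z`, then there is a constant `B`, depending only on `δ` and `M`,
bounding `d(p x, p y)` whenever some geodesic `[x, y]` avoids the
`(M 1 0 + δ + 1)`-neighborhood of `Z` and `d(x, Z) > d(x, y) + 1`. -/
theorem nearest_point_projection_contracting {X : Type*} [MetricSpace X]
    (δ : ℝ) (hδ : 0 ≤ δ) (hgeo : IsGeodesicSpace X) (hhyp : IsHyperbolic X δ)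
    (Z : Set X) (hZ : Z.Nonempty) (M : ℝ → ℝ → ℝ)
    (hQC : ∀ (l e : ℝ) (α : ℝ → X) (u v : ℝ), u ≤ v → IsQGOn α (Icc u v) l e →
      α u ∈ Z → α v ∈ Z → ∀ t ∈ Icc u v, infDist (α t) Z ≤ M l e)
    (p : X → X) (hp : ∀ x : X, p x ∈ Z ∧ dist x (p x) = infDist x Z) :
    ∃ B : ℝ, ∀ (x y : X) (f : ℝ → X),
      f 0 = x → f (dist x y) = y →
      (∀ s ∈ Icc (0 : ℝ) (dist x y), ∀ t ∈ Icc (0 : ℝ) (dist x y),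
        dist (f s) (f t) = |s - t|) →
      (∀ t ∈ Icc (0 : ℝ) (dist x y), f t ∉ thickening (M 1 0 + δ + 1) Z) →
      dist x y + 1 < infDist x Z →
      dist (p x) (p y) ≤ B := by
  set M₀ : ℝ := M 1 0 with hM₀
  -- M₀ is nonnegative: apply quasi-convexity to a constant path at a point of Z.
  obtain ⟨z₀, hz₀⟩ := hZ
  have hM₀0 : 0 ≤ M₀ := by
    have h := hQC 1 0 (fun _ => z₀) 0 0 le_rfl ?_ hz₀ hz₀ 0 ⟨le_rfl, le_rfl⟩
    · have : infDist z₀ Z = 0 := by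
        rw [infDist_zero_of_mem hz₀]
      linarith [h, this.symm.le.trans h]
    · intro s hs t ht
      simp only [mem_Icc] at hs ht
      have hs0 : s = 0 := le_antisymm hs.2 hs.1
      have ht0 : t = 0 := le_antisymm ht.2 ht.1
      subst hs0; subst ht0
      simp
  set K : ℝ := 2 * M₀ + 4 * δ + 1 with hK
  -- Gate property: for every w and z ∈ Z, d(w,z) ≥ d(w, p w) + d(p w, z) - K.
  have gate : ∀ w : X, ∀ z ∈ Z, dist w (p w) + dist (p w) z - K ≤ dist w z := by
    intro w z hz
    obtain ⟨haZ, hda⟩ := hp w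
    set a := p w with ha
    by_cases hshort : dist a z ≤ M₀ + 2 * δ + 1
    · have h1 : infDist w Z ≤ dist w z := infDist_le_dist_of_mem hz
      rw [← hda] at h1
      linarith
    · push_neg at hshort
      obtain ⟨g, hg0, hg1, hgiso⟩ := hgeo a z
      set s₀ : ℝ := M₀ + 2 * δ + 1 with hs₀
      have hs₀mem : s₀ ∈ Icc (0 : ℝ) (dist a z) := ⟨by linarith, hshort.le⟩
      have h0mem : (0 : ℝ) ∈ Icc (0 : ℝ) (dist a z) := ⟨le_rfl, dist_nonneg⟩
      have hdmem : dist a z ∈ Icc (0 : ℝ) (dist a z) := ⟨dist_nonneg, le_rfl⟩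
      -- the geodesic is a (1,0)-quasi-geodesic
      have hqg : IsQGOn g (Icc 0 (dist a z)) 1 0 := by
        intro s hs t ht
        rw [hgiso s hs t ht]
        constructor
        · simp
        · simp
      have hclose : infDist (g s₀) Z ≤ M₀ :=
        hQC 1 0 g 0 (dist a z) dist_nonneg hqg (by rwa [hg0]) (by rwa [hg1]) s₀ hs₀mem
      have hda' : dist (g s₀) a = s₀ := by
        have := hgiso s₀ hs₀mem 0 h0mem
        rw [hg0] at this
        rw [this]
        rw [abs_of_nonneg (by linarith : (0:ℝ) ≤ s₀ - 0)]
        ring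
      have hdz' : dist (g s₀) z = dist a z - s₀ := by
        have := hgiso s₀ hs₀mem (dist a z) hdmem
        rw [hg1] at this
        rw [this, abs_of_nonpos (by linarith : s₀ - dist a z ≤ 0)]
        ring
      have hlow : dist w a - M₀ ≤ dist w (g s₀) := by
        have h1 : infDist w Z ≤ infDist (g s₀) Z + dist w (g s₀) :=
          infDist_le_infDist_add_dist
        rw [← hda] at h1
        linarith
      have h4 := hhyp w (g s₀) a z
      rcases le_total (dist w a + dist (g s₀) z) (dist w z + dist (g s₀) a) with hm | hm
      · rw [max_eq_right hm] at h4
        rw [hda'] at h4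
        linarith
      · rw [max_eq_left hm] at h4
        rw [hdz'] at h4
        linarith
  refine ⟨2 * K + 2 * δ, ?_⟩
  intro x y f hf0 hf1 hfiso hfavoid hfar
  obtain ⟨haZ, hda⟩ := hp x
  obtain ⟨hbZ, hdb⟩ := hp y
  set a := p x
  set b := p y
  have hdx : dist x a = infDist x Z := hda
  have hdy : dist y b = infDist y Z := hdb
  -- gate inequalities
  have g1 : dist x a + dist a b - K ≤ dist x b := gate x b hbZ
  have g2 : dist y b + dist b a - K ≤ dist y a := gate y a haZ
  -- basic inequalities
  have h1 : infDist x Z ≤ dist x b := infDist_le_dist_of_mem hbZ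
  have h2 : infDist y Z ≤ dist y a := infDist_le_dist_of_mem haZ
  have h3 : 0 ≤ infDist y Z := infDist_nonneg
  have h4 : dist x b ≤ dist x y + dist y b := dist_triangle x y b
  have h5 : dist y a ≤ dist y x + dist x a := dist_triangle y x a
  have hyx : dist y x = dist x y := dist_comm y x
  have hba : dist b a = dist a b := dist_comm b a
  -- hyperbolic four-point inequality on (x, b, y, a)
  have h6 := hhyp x b y a
  rw [dist_comm b a] at h6
  rcases le_total (dist x y + dist a b) (dist x a + dist b y) with hm | hm
  · rw [max_eq_right hm] at h6
    have hby : dist b y = dist y b := dist_comm b y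
    -- case: d(x,b) + d(y,a) ≤ d(x,a) + d(y,b) + 2δ
    rw [hby] at h6
    linarith
  · rw [max_eq_left hm] at h6
    -- case: d(x,b) + d(y,a) ≤ d(x,y) + d(a,b) + 2δ
    linarith
end
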